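/- Let (A, B, ⟨·,·⟩) be a non-degenerate pairing of finite Hopf C*-algebras and *_D the involution on the quantum double D(A,B). Then *_D is involutive: for all a ∈ A and b ∈ B, ((a,b)*)* = (a,b). -/

import Mathlib

noncomputable section
open scoped TensorProduct
open TensorProduct LinearMap

namespace QD

/-! ### Componentwise star on tensor products of star modules over `ℂ` -/

section StarTensor

variable (A B : Type*) [AddCommGroup A] [AddCommGroup B] [Module ℂ A] [Module ℂ B]
  [StarAddMonoid A] [StarAddMonoid B] [StarModule ℂ A] [StarModule ℂ B]

/-- The componentwise star on a tensor product of star modules over `ℂ`. -/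
def starAddHom : A ⊗[ℂ] B →+ A ⊗[ℂ] B :=
  TensorProduct.liftAddHom
    { toFun := fun a =>
        { toFun := fun b => star a ⊗ₜ[ℂ] star b
          map_zero' := by simp
          map_add' := fun b₁ b₂ => by simp [star_add, TensorProduct.tmul_add] }
      map_zero' := by ext b; simp
      map_add' := fun a₁ a₂ => by ext b; simp [star_add, TensorProduct.add_tmul] }
    fun c a b => by simp [star_smul, TensorProduct.smul_tmul]

instance : StarAddMonoid (A ⊗[ℂ] B) where
  star x := starAddHom A B x
  star_involutive x := by
    show starAddHom A B (starAddHom A B x) = x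
    induction x using TensorProduct.induction_on with
    | zero => simp
    | tmul a b => simp [starAddHom]
    | add x y hx hy => rw [map_add, map_add, hx, hy]
  star_add x y := (starAddHom A B).map_add x y

variable {A B}

lemma star_def (x : A ⊗[ℂ] B) : star x = starAddHom A B x := rfl

@[simp] lemma star_tmul (a : A) (b : B) :
    star (a ⊗ₜ[ℂ] b) = (star a) ⊗ₜ[ℂ] (star b) := by
  simp [star_def, starAddHom]

variable (A B)

instance : StarModule ℂ (A ⊗[ℂ] B) where
  star_smul c x := by
    induction x using TensorProduct.induction_on with
    | zero => rw [smul_zero, star_def, map_zero, smul_zero]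
    | tmul a b => rw [TensorProduct.smul_tmul', star_tmul, star_tmul, star_smul,
        TensorProduct.smul_tmul']
    | add x y hx hy => rw [smul_add, @star_add _ _ TensorProduct.instStarAddMonoid,
        @star_add _ _ TensorProduct.instStarAddMonoid, hx, hy, smul_add]

end StarTensor

/-! ### Finite Hopf C*-algebras -/

/-- A finite Hopf C*-algebra structure on a finite-dimensional C*-algebra `A`:
a comultiplication, counit and antipode satisfying the Hopf algebra axioms,
such that the comultiplication and counit are *-homomorphisms and the antipode
satisfies `S(S(a)*)* = a` (and consequently `S² = id`). -/
structure FiniteHopfCStar (A : Type*) [NormedRing A] [StarRing A] [CStarRing A]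
    [NormedAlgebra ℂ A] [StarModule ℂ A] [FiniteDimensional ℂ A] where
  /-- The comultiplication. -/
  comul : A →ₗ[ℂ] A ⊗[ℂ] A
  /-- The counit. -/
  counit : A →ₗ[ℂ] ℂ
  /-- The antipode. -/
  antipode : A →ₗ[ℂ] A
  coassoc : ∀ a : A,
    (TensorProduct.assoc ℂ A A A) (LinearMap.rTensor A comul (comul a)) =
      LinearMap.lTensor A comul (comul a)
  counit_comul : ∀ a : A, (TensorProduct.lid ℂ A) (LinearMap.rTensor A counit (comul a)) = a
  comul_counit : ∀ a : A, (TensorProduct.rid ℂ A) (LinearMap.lTensor A counit (comul a)) = a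
  comul_one : comul 1 = 1
  comul_mul : ∀ a b : A, comul (a * b) = comul a * comul b
  counit_one : counit 1 = 1
  counit_mul : ∀ a b : A, counit (a * b) = counit a * counit b
  comul_star : ∀ a : A, comul (star a) = star (comul a)
  counit_star : ∀ a : A, counit (star a) = star (counit a)
  mul_antipode_rTensor_comul : ∀ a : A,
    LinearMap.mul' ℂ A (LinearMap.rTensor A antipode (comul a)) = counit a • 1
  mul_antipode_lTensor_comul : ∀ a : A,
    LinearMap.mul' ℂ A (LinearMap.lTensor A antipode (comul a)) = counit a • 1
  star_antipode_star_antipode : ∀ a : A, star (antipode (star (antipode a))) = a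
  antipode_antipode : ∀ a : A, antipode (antipode a) = a

/-! ### Pairings -/

section Pairing

variable {A B : Type*} [AddCommGroup A] [AddCommGroup B] [Module ℂ A] [Module ℂ B]

/-- The extension of a bilinear pairing `A × B → ℂ` to `(A ⊗ A) × (B ⊗ B) → ℂ`,
`⟨a₁ ⊗ a₂, b₁ ⊗ b₂⟩ = ⟨a₁, b₁⟩ ⟨a₂, b₂⟩`. -/
def pairT (p : A →ₗ[ℂ] B →ₗ[ℂ] ℂ) :
    A ⊗[ℂ] A →ₗ[ℂ] Module.Dual ℂ (B ⊗[ℂ] B) :=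
  TensorProduct.dualDistrib ℂ B B ∘ₗ TensorProduct.map p p

/-- Non-degeneracy of a bilinear pairing. -/
def Nondegenerate (p : A →ₗ[ℂ] B →ₗ[ℂ] ℂ) : Prop :=
  (∀ a : A, (∀ b : B, p a b = 0) → a = 0) ∧ (∀ b : B, (∀ a : A, p a b = 0) → b = 0)

end Pairing

section Main

variable {A B : Type*}
  [NormedRing A] [StarRing A] [CStarRing A] [NormedAlgebra ℂ A] [StarModule ℂ A]
  [FiniteDimensional ℂ A]
  [NormedRing B] [StarRing B] [CStarRing B] [NormedAlgebra ℂ B] [StarModule ℂ B]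
  [FiniteDimensional ℂ B]

variable (hA : FiniteHopfCStar A) (hB : FiniteHopfCStar B) (p : A →ₗ[ℂ] B →ₗ[ℂ] ℂ)

/-- A pairing of finite Hopf C*-algebras. -/
structure IsHopfPairing : Prop where
  pair_comul : ∀ (a : A) (b₁ b₂ : B), pairT p (hA.comul a) (b₁ ⊗ₜ[ℂ] b₂) = p a (b₁ * b₂)
  pair_mul : ∀ (a₁ a₂ : A) (b : B), pairT p.flip (hB.comul b) (a₁ ⊗ₜ[ℂ] a₂) = p (a₁ * a₂) b
  pair_star : ∀ (a : A) (b : B), p (star a) b = starRingEnd ℂ (p a (star (hB.antipode b)))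
  pair_one_right : ∀ a : A, p a 1 = hA.counit a
  pair_one_left : ∀ b : B, p 1 b = hB.counit b
  pair_antipode : ∀ (a : A) (b : B), p (hA.antipode a) b = p a (hB.antipode b)

/-- `a ▷ b = Σ b₍₁₎ ⟨a, b₍₂₎⟩`, the left action of `A` on `B`. -/
def lact (a : A) (b : B) : B :=
  TensorProduct.rid ℂ B ((LinearMap.lTensor B (p a)) (hB.comul b))

/-- `b ◁ a = Σ ⟨a, b₍₁₎⟩ b₍₂₎`, the right action of `A` on `B`. -/
def ract (b : B) (a : A) : B :=
  TensorProduct.lid ℂ B ((LinearMap.rTensor B (p a)) (hB.comul b))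

/-- `b ▷ a = Σ a₍₁₎ ⟨a₍₂₎, b⟩`, the left action of `B` on `A`. -/
def lact' (b : B) (a : A) : A :=
  TensorProduct.rid ℂ A ((LinearMap.lTensor A (p.flip b)) (hA.comul a))

/-- `a ◁ b = Σ ⟨a₍₁₎, b⟩ a₍₂₎`, the right action of `B` on `A`. -/
def ract' (a : A) (b : B) : A :=
  TensorProduct.lid ℂ A ((LinearMap.rTensor A (p.flip b)) (hA.comul a))

end Main

end QD

namespace QD

section Triples

variable {X : Type*} [NormedRing X] [StarRing X] [CStarRing X] [NormedAlgebra ℂ X]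
  [StarModule ℂ X] [FiniteDimensional ℂ X]

/-- The iterated comultiplication `x ↦ Σ x₍₁₎ ⊗ (x₍₂₎ ⊗ x₍₃₎)`. -/
def comul3 (h : FiniteHopfCStar X) : X →ₗ[ℂ] X ⊗[ℂ] (X ⊗[ℂ] X) :=
  LinearMap.lTensor X h.comul ∘ₗ h.comul

end Triples

section Rot

variable (X : Type*) [AddCommGroup X] [Module ℂ X]

/-- The rearrangement `x₁ ⊗ (x₂ ⊗ x₃) ↦ (x₃ ⊗ x₁) ⊗ x₂`. -/
def rot31 : X ⊗[ℂ] (X ⊗[ℂ] X) →ₗ[ℂ] (X ⊗[ℂ] X) ⊗[ℂ] X :=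
  (TensorProduct.comm ℂ X (X ⊗[ℂ] X)).toLinearMap
    ∘ₗ (TensorProduct.assoc ℂ X X X).toLinearMap
    ∘ₗ (TensorProduct.comm ℂ X (X ⊗[ℂ] X)).toLinearMap

/-- The rearrangement `x₁ ⊗ (x₂ ⊗ x₃) ↦ (x₁ ⊗ x₃) ⊗ x₂`. -/
def rot13 : X ⊗[ℂ] (X ⊗[ℂ] X) →ₗ[ℂ] (X ⊗[ℂ] X) ⊗[ℂ] X :=
  (TensorProduct.assoc ℂ X X X).symm.toLinearMap
    ∘ₗ LinearMap.lTensor X (TensorProduct.comm ℂ X X).toLinearMap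

/-- Collapsing scalar factors `(c₁ ⊗ c₂) ⊗ m ↦ (c₁ * c₂) • m`. -/
def collapse : (ℂ ⊗[ℂ] ℂ) ⊗[ℂ] X →ₗ[ℂ] X :=
  (TensorProduct.lid ℂ X).toLinearMap
    ∘ₗ LinearMap.rTensor X (TensorProduct.lid ℂ ℂ).toLinearMap

end Rot

section Double

variable {A B : Type*}
  [NormedRing A] [StarRing A] [CStarRing A] [NormedAlgebra ℂ A] [StarModule ℂ A]
  [FiniteDimensional ℂ A]
  [NormedRing B] [StarRing B] [CStarRing B] [NormedAlgebra ℂ B] [StarModule ℂ B]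
  [FiniteDimensional ℂ B]

variable (hA : FiniteHopfCStar A) (hB : FiniteHopfCStar B) (p : A →ₗ[ℂ] B →ₗ[ℂ] ℂ)

/-- Contraction `((b₃ ⊗ b₁) ⊗ b₂) ⊗ ((a₁ ⊗ a₃) ⊗ a₂) ↦ ⟨a₁, S_B b₃⟩ ⟨a₃, b₁⟩ (a₂ ⊗ b₂)`. -/
def mulAux : ((B ⊗[ℂ] B) ⊗[ℂ] B) ⊗[ℂ] ((A ⊗[ℂ] A) ⊗[ℂ] A) →ₗ[ℂ] A ⊗[ℂ] B :=
  collapse (A ⊗[ℂ] B)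
    ∘ₗ TensorProduct.map
        (TensorProduct.map (TensorProduct.lift (p.flip ∘ₗ hB.antipode))
          (TensorProduct.lift p.flip))
        (TensorProduct.comm ℂ B A).toLinearMap
    ∘ₗ LinearMap.rTensor (B ⊗[ℂ] A)
        (TensorProduct.tensorTensorTensorComm ℂ B B A A).toLinearMap
    ∘ₗ (TensorProduct.tensorTensorTensorComm ℂ (B ⊗[ℂ] B) B (A ⊗[ℂ] A) A).toLinearMap

/-- The middle part of the quantum double multiplication:
`b ⊗ a' ↦ Σ ⟨a'₍₁₎, S_B⁻¹ b₍₃₎⟩ ⟨a'₍₃₎, b₍₁₎⟩ (a'₍₂₎ ⊗ b₍₂₎)` (recall `S_B⁻¹ = S_B`). -/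
def mdMid : B ⊗[ℂ] A →ₗ[ℂ] A ⊗[ℂ] B :=
  mulAux hB p ∘ₗ
    TensorProduct.map (rot31 B ∘ₗ comul3 hB) (rot13 A ∘ₗ comul3 hA)

/-- The multiplication of the quantum double `D(A,B)`:
`(a ⊗ b) (a' ⊗ b') = Σ ⟨a'₍₁₎, S_B⁻¹ b₍₃₎⟩ ⟨a'₍₃₎, b₍₁₎⟩ (a a'₍₂₎ ⊗ b₍₂₎ b')`. -/
def mD : (A ⊗[ℂ] B) ⊗[ℂ] (A ⊗[ℂ] B) →ₗ[ℂ] A ⊗[ℂ] B :=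
  (LinearMap.mul' ℂ (A ⊗[ℂ] B) ∘ₗ
      LinearMap.rTensor (A ⊗[ℂ] B)
        (Algebra.TensorProduct.includeLeft : A →ₐ[ℂ] A ⊗[ℂ] B).toLinearMap)
    ∘ₗ LinearMap.lTensor A
        ((LinearMap.mul' ℂ (A ⊗[ℂ] B) ∘ₗ
            LinearMap.lTensor (A ⊗[ℂ] B)
              (Algebra.TensorProduct.includeRight : B →ₐ[ℂ] A ⊗[ℂ] B).toLinearMap)
          ∘ₗ LinearMap.rTensor B (mdMid hA hB p))
    ∘ₗ LinearMap.lTensor A (TensorProduct.assoc ℂ B A B).symm.toLinearMap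
    ∘ₗ (TensorProduct.assoc ℂ A B (A ⊗[ℂ] B)).toLinearMap

/-- The comultiplication of the quantum double. -/
def ΔD : A ⊗[ℂ] B →ₗ[ℂ] (A ⊗[ℂ] B) ⊗[ℂ] (A ⊗[ℂ] B) :=
  (TensorProduct.tensorTensorTensorComm ℂ A A B B).toLinearMap
    ∘ₗ TensorProduct.map hA.comul hB.comul

/-- The tensor product of two linear functionals, as a functional on the tensor product. -/
def funcT (φA : A →ₗ[ℂ] ℂ) (φB : B →ₗ[ℂ] ℂ) : A ⊗[ℂ] B →ₗ[ℂ] ℂ :=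
  (TensorProduct.lid ℂ ℂ).toLinearMap ∘ₗ TensorProduct.map φA φB

/-- The counit of the quantum double. -/
def εD : A ⊗[ℂ] B →ₗ[ℂ] ℂ := funcT hA.counit hB.counit

/-- The antipode of the quantum double:
`S_D (a ⊗ b) = Σ ⟨a₍₁₎, S_B b₍₃₎⟩ ⟨a₍₃₎, b₍₁₎⟩ (S_A a₍₂₎ ⊗ S_B b₍₂₎)`. -/
def SD : A ⊗[ℂ] B →ₗ[ℂ] A ⊗[ℂ] B :=
  TensorProduct.map hA.antipode hB.antipode ∘ₗ mdMid hA hB p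
    ∘ₗ (TensorProduct.comm ℂ A B).toLinearMap

/-- Contraction `(u₁ ⊗ (u₂ ⊗ u₃)) ⊗ (v₁ ⊗ (v₂ ⊗ v₃)) ↦ ⟨u₃, v₁⟩ ⟨u₁, v₃⟩ (u₂ ⊗ v₂)`. -/
def starContract : (A ⊗[ℂ] (A ⊗[ℂ] A)) ⊗[ℂ] (B ⊗[ℂ] (B ⊗[ℂ] B)) →ₗ[ℂ] A ⊗[ℂ] B :=
  collapse (A ⊗[ℂ] B)
    ∘ₗ LinearMap.rTensor (A ⊗[ℂ] B)
        (TensorProduct.map (TensorProduct.lift p) (TensorProduct.lift p))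
    ∘ₗ LinearMap.rTensor (A ⊗[ℂ] B)
        (TensorProduct.tensorTensorTensorComm ℂ A A B B).toLinearMap
    ∘ₗ (TensorProduct.tensorTensorTensorComm ℂ (A ⊗[ℂ] A) A (B ⊗[ℂ] B) B).toLinearMap
    ∘ₗ TensorProduct.map (rot31 A) (rot13 B)

/-- The involution of the quantum double:
`(a ⊗ b)* = Σ ⟨a₍₃₎*, b₍₁₎*⟩ ⟨a₍₁₎*, (S_B b₍₃₎)*⟩ (a₍₂₎* ⊗ b₍₂₎*)`,
extended conjugate-linearly. -/
def starD (x : A ⊗[ℂ] B) : A ⊗[ℂ] B :=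
  starContract p
    (star ((TensorProduct.map (comul3 hA)
        (LinearMap.lTensor B (LinearMap.lTensor B hB.antipode) ∘ₗ comul3 hB)) x))

/-- The composite of `starD` with the componentwise star, a linear map. -/
def starDbar : A ⊗[ℂ] B →ₗ[ℂ] A ⊗[ℂ] B where
  toFun x := star (starD hA hB p x)
  map_add' x y := by
    simp only [starD]
    rw [map_add, @star_add _ _ TensorProduct.instStarAddMonoid, map_add,
      @star_add _ _ TensorProduct.instStarAddMonoid]
  map_smul' c x := by
    simp only [starD, map_smul, star_smul, RingHom.id_apply, starRingEnd_apply, star_star]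

end Double

end QD

namespace QD

/-!
For a bilinear form `e` on `A × B` let `L_e (a ⊗ b) = Σ e(a₍₂₎, b₍₁₎) a₍₁₎ ⊗ b₍₂₎` and
`R_e (a ⊗ b) = Σ e(a₍₁₎, b₍₂₎) a₍₂₎ ⊗ b₍₁₎`. Since `S` commutes with `*`, the involution of
`D(A,B)` is `x ↦ L_p R_{p∘S} x*` with `x*` the componentwise star. Conjugating `L_e` or `R_e` by
the componentwise star replaces `e` by `(a, b) ↦ conj e(a*, b*)`, and as
`⟨a*, b*⟩ = conj ⟨a, S b⟩` and `S² = id` this turns `L_p R_{p∘S}` into `L_{p∘S} R_p`. Hence the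
involution applied twice is `L_p R_{p∘S} L_{p∘S} R_p`. By coassociativity every `L` commutes with every `R`, and
`L_e L_g = L_{e ⋆ g}`, `R_e R_g = R_{g ⋆ e}` for `(e ⋆ g)(a, b) = Σ e(a₍₁₎, b₍₂₎) g(a₍₂₎, b₍₁₎)`.
Finally `p ⋆ (p∘S) = ε ⊗ ε` because `Σ b₍₂₎ S(b₍₁₎) = ε(b) 1`, and `L_{ε⊗ε} = R_{ε⊗ε} = id`.
-/

-- The componentwise star instances above, stated for `ℂ`-modules that are additive groups, take
-- precedence over Mathlib's and leave e.g. `(A ⊗ A) ⊗ A` without a `StarModule ℂ` instance.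
attribute [local instance high] TensorProduct.instStarAddMonoid TensorProduct.instStarModule

open Coalgebra

section Contraction

variable {R A B X Y X' Y' A' B' : Type*} [CommSemiring R]
  [AddCommMonoid A] [Module R A] [AddCommMonoid B] [Module R B]
  [AddCommMonoid X] [Module R X] [AddCommMonoid Y] [Module R Y]
  [AddCommMonoid X'] [Module R X'] [AddCommMonoid Y'] [Module R Y']
  [AddCommMonoid A'] [Module R A'] [AddCommMonoid B'] [Module R B']

def contractInner (e : A →ₗ[R] B →ₗ[R] R) : (X ⊗[R] A) ⊗[R] (B ⊗[R] Y) →ₗ[R] X ⊗[R] Y :=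
  lTensor X ((TensorProduct.lid R Y).toLinearMap ∘ₗ rTensor Y (lift e) ∘ₗ
      (TensorProduct.assoc R A B Y).symm.toLinearMap) ∘ₗ
    (TensorProduct.assoc R X A (B ⊗[R] Y)).toLinearMap

def contractOuter (e : A →ₗ[R] B →ₗ[R] R) : (A ⊗[R] X) ⊗[R] (Y ⊗[R] B) →ₗ[R] X ⊗[R] Y :=
  (TensorProduct.lid R (X ⊗[R] Y)).toLinearMap ∘ₗ rTensor (X ⊗[R] Y) (lift e) ∘ₗ
    (tensorTensorTensorComm R A X B Y).toLinearMap ∘ₗ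
    lTensor (A ⊗[R] X) (TensorProduct.comm R Y B).toLinearMap

@[simp] lemma contractInner_tmul (e : A →ₗ[R] B →ₗ[R] R) (x : X) (a : A) (b : B) (y : Y) :
    contractInner e ((x ⊗ₜ a) ⊗ₜ (b ⊗ₜ y)) = e a b • (x ⊗ₜ[R] y) := by
  simp [contractInner, tmul_smul]

@[simp] lemma contractOuter_tmul (e : A →ₗ[R] B →ₗ[R] R) (a : A) (x : X) (y : Y) (b : B) :
    contractOuter e ((a ⊗ₜ x) ⊗ₜ (y ⊗ₜ b)) = e a b • (x ⊗ₜ[R] y) := by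
  simp [contractOuter]

lemma map_comp_contractInner (e : A →ₗ[R] B →ₗ[R] R) (f : X →ₗ[R] X') (g : Y →ₗ[R] Y') :
    map f g ∘ₗ contractInner e = contractInner e ∘ₗ map (rTensor A f) (lTensor B g) := by
  ext; simp

lemma map_comp_contractOuter (e : A →ₗ[R] B →ₗ[R] R) (f : X →ₗ[R] X') (g : Y →ₗ[R] Y') :
    map f g ∘ₗ contractOuter e = contractOuter e ∘ₗ map (lTensor A f) (rTensor B g) := by
  ext; simp

lemma contractInner_compl₁₂ (e : A' →ₗ[R] B' →ₗ[R] R) (f : A →ₗ[R] A') (g : B →ₗ[R] B') :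
    contractInner (X := X) (Y := Y) (e.compl₁₂ f g) =
      contractInner e ∘ₗ map (lTensor X f) (rTensor Y g) := by
  ext; simp

lemma contractOuter_compl₁₂ (e : A' →ₗ[R] B' →ₗ[R] R) (f : A →ₗ[R] A') (g : B →ₗ[R] B') :
    contractOuter (X := X) (Y := Y) (e.compl₁₂ f g) =
      contractOuter e ∘ₗ map (rTensor X f) (lTensor Y g) := by
  ext; simp

def crossPair (e g : A →ₗ[R] B →ₗ[R] R) : A ⊗[R] A →ₗ[R] B ⊗[R] B →ₗ[R] R :=
  (dualDistrib R B B ∘ₗ map e g).compl₂ (TensorProduct.comm R B B).toLinearMap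

@[simp] lemma crossPair_tmul (e g : A →ₗ[R] B →ₗ[R] R) (a₁ a₂ : A) (b₁ b₂ : B) :
    crossPair e g (a₁ ⊗ₜ a₂) (b₁ ⊗ₜ b₂) = e a₁ b₂ * g a₂ b₁ := by
  simp [crossPair]

end Contraction

section Coalgebra

variable {R A B : Type*} [CommSemiring R]
  [AddCommMonoid A] [Module R A] [Coalgebra R A] [AddCommMonoid B] [Module R B] [Coalgebra R B]

def leftContract (e : A →ₗ[R] B →ₗ[R] R) : A ⊗[R] B →ₗ[R] A ⊗[R] B :=
  contractInner e ∘ₗ map comul comul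

def rightContract (e : A →ₗ[R] B →ₗ[R] R) : A ⊗[R] B →ₗ[R] A ⊗[R] B :=
  contractOuter e ∘ₗ map comul comul

def convPair (e g : A →ₗ[R] B →ₗ[R] R) : A →ₗ[R] B →ₗ[R] R :=
  (crossPair e g).compl₁₂ comul comul

lemma leftContract_comp_leftContract (e g : A →ₗ[R] B →ₗ[R] R) :
    leftContract e ∘ₗ leftContract g = leftContract (convPair e g) := by
  have inner : contractInner e ∘ₗ contractInner g =
      contractInner (X := A) (Y := B) (crossPair e g) ∘ₗ
        map (TensorProduct.assoc R A A A).toLinearMap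
          (TensorProduct.assoc R B B B).symm.toLinearMap := by
    ext; simp [smul_smul, mul_comm]
  calc leftContract e ∘ₗ leftContract g
      = (contractInner e ∘ₗ contractInner g) ∘ₗ
          map (rTensor A comul ∘ₗ comul) (lTensor B comul ∘ₗ comul) := by
        rw [leftContract, leftContract, comp_assoc, ← comp_assoc _ (contractInner g),
          map_comp_contractInner, map_comp]
        simp only [comp_assoc]
    _ = contractInner (crossPair e g) ∘ₗ
          map (lTensor A comul ∘ₗ comul) (rTensor B comul ∘ₗ comul) := by
        rw [inner, comp_assoc, ← map_comp]
        simp only [coassoc, coassoc_symm]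
    _ = leftContract (convPair e g) := by
        rw [leftContract, convPair, contractInner_compl₁₂, comp_assoc, ← map_comp]

lemma rightContract_comp_rightContract (e g : A →ₗ[R] B →ₗ[R] R) :
    rightContract e ∘ₗ rightContract g = rightContract (convPair g e) := by
  have inner : contractOuter e ∘ₗ contractOuter g =
      contractOuter (X := A) (Y := B) (crossPair g e) ∘ₗ
        map (TensorProduct.assoc R A A A).symm.toLinearMap
          (TensorProduct.assoc R B B B).toLinearMap := by
    ext; simp [smul_smul, mul_comm]
  calc rightContract e ∘ₗ rightContract g
      = (contractOuter e ∘ₗ contractOuter g) ∘ₗ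
          map (lTensor A comul ∘ₗ comul) (rTensor B comul ∘ₗ comul) := by
        rw [rightContract, rightContract, comp_assoc, ← comp_assoc _ (contractOuter g),
          map_comp_contractOuter, map_comp]
        simp only [comp_assoc]
    _ = contractOuter (crossPair g e) ∘ₗ
          map (rTensor A comul ∘ₗ comul) (lTensor B comul ∘ₗ comul) := by
        rw [inner, comp_assoc, ← map_comp]
        simp only [coassoc, coassoc_symm]
    _ = rightContract (convPair g e) := by
        rw [rightContract, convPair, contractOuter_compl₁₂, comp_assoc, ← map_comp]

lemma leftContract_comp_rightContract_eq (e f : A →ₗ[R] B →ₗ[R] R) :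
    leftContract e ∘ₗ rightContract f = (contractInner e ∘ₗ contractOuter f) ∘ₗ
      map (lTensor A comul ∘ₗ comul) (rTensor B comul ∘ₗ comul) := by
  rw [leftContract, rightContract, comp_assoc, ← comp_assoc _ (contractOuter f),
    map_comp_contractOuter, map_comp]
  simp only [comp_assoc]

lemma leftContract_comp_rightContract_comm (e f : A →ₗ[R] B →ₗ[R] R) :
    leftContract e ∘ₗ rightContract f = rightContract f ∘ₗ leftContract e := by
  have inner : contractInner e ∘ₗ contractOuter f =
      contractOuter (X := A) (Y := B) f ∘ₗ contractInner e ∘ₗ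
        map (TensorProduct.assoc R A A A).symm.toLinearMap
          (TensorProduct.assoc R B B B).toLinearMap := by
    ext; simp [smul_smul, mul_comm]
  calc leftContract e ∘ₗ rightContract f
      = (contractOuter f ∘ₗ contractInner e) ∘ₗ
          map (rTensor A comul ∘ₗ comul) (lTensor B comul ∘ₗ comul) := by
        rw [leftContract_comp_rightContract_eq, inner, comp_assoc, comp_assoc, ← map_comp]
        simp only [comp_assoc, coassoc, coassoc_symm]
    _ = rightContract f ∘ₗ leftContract e := by
        simp only [leftContract, rightContract, comp_assoc]
        rw [← comp_assoc _ (contractInner e) (map comul comul), map_comp_contractInner,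
          comp_assoc, ← map_comp]

lemma leftContract_counit :
    leftContract ((LinearMap.mul R R).compl₁₂ counit counit) = LinearMap.id (M := A ⊗[R] B) := by
  have hmul : contractInner (X := A) (Y := B) (LinearMap.mul R R) =
      map (TensorProduct.rid R A).toLinearMap (TensorProduct.lid R B).toLinearMap := by
    ext; simp
  rw [leftContract, contractInner_compl₁₂, hmul, comp_assoc, ← map_comp, ← map_comp,
    lTensor_counit_comp_comul, rTensor_counit_comp_comul]
  ext; simp

lemma rightContract_counit :
    rightContract ((LinearMap.mul R R).compl₁₂ counit counit) = LinearMap.id (M := A ⊗[R] B) := by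
  have hmul : contractOuter (X := A) (Y := B) (LinearMap.mul R R) =
      map (TensorProduct.lid R A).toLinearMap (TensorProduct.rid R B).toLinearMap := by
    ext; simp
  rw [rightContract, contractOuter_compl₁₂, hmul, comp_assoc, ← map_comp, ← map_comp,
    lTensor_counit_comp_comul, rTensor_counit_comp_comul]
  ext; simp

end Coalgebra

section Star

variable {R A B X Y X' Y' : Type*} [CommSemiring R] [StarRing R]
  [AddCommMonoid A] [Module R A] [StarAddMonoid A] [StarModule R A]
  [AddCommMonoid B] [Module R B] [StarAddMonoid B] [StarModule R B]
  [AddCommMonoid X] [Module R X] [StarAddMonoid X] [StarModule R X]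
  [AddCommMonoid Y] [Module R Y] [StarAddMonoid Y] [StarModule R Y]
  [AddCommMonoid X'] [Module R X'] [StarAddMonoid X'] [StarModule R X']
  [AddCommMonoid Y'] [Module R Y'] [StarAddMonoid Y'] [StarModule R Y']

lemma map_star_of_map_star {f : X →ₗ[R] X'} {g : Y →ₗ[R] Y'}
    (hf : ∀ x, f (star x) = star (f x)) (hg : ∀ y, g (star y) = star (g y)) (z : X ⊗[R] Y) :
    map f g (star z) = star (map f g z) := by
  induction z using TensorProduct.induction_on with
  | zero => simp
  | tmul x y => simp [hf, hg]
  | add z w hz hw => simp only [star_add, map_add, hz, hw]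

lemma star_contractInner_star {e e' : A →ₗ[R] B →ₗ[R] R}
    (he : ∀ a b, e' a b = star (e (star a) (star b))) (w : (X ⊗[R] A) ⊗[R] (B ⊗[R] Y)) :
    star (contractInner e (star w)) = contractInner e' w := by
  have : star (WithConv.toConv (contractInner (X := X) (Y := Y) e)) =
      WithConv.toConv (contractInner e') := by
    ext; simp [he]
  simpa using congr($this w)

lemma star_contractOuter_star {e e' : A →ₗ[R] B →ₗ[R] R}
    (he : ∀ a b, e' a b = star (e (star a) (star b))) (w : (A ⊗[R] X) ⊗[R] (Y ⊗[R] B)) :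
    star (contractOuter e (star w)) = contractOuter e' w := by
  have : star (WithConv.toConv (contractOuter (X := X) (Y := Y) e)) =
      WithConv.toConv (contractOuter e') := by
    ext; simp [he]
  simpa using congr($this w)

variable [Coalgebra R A] [Coalgebra R B]

lemma star_leftContract_star (hA : ∀ a : A, comul (R := R) (star a) = star (comul a))
    (hB : ∀ b : B, comul (R := R) (star b) = star (comul b)) {e e' : A →ₗ[R] B →ₗ[R] R}
    (he : ∀ a b, e' a b = star (e (star a) (star b))) (x : A ⊗[R] B) :
    star (leftContract e (star x)) = leftContract e' x := by
  rw [leftContract, comp_apply, map_star_of_map_star hA hB, star_contractInner_star he]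
  rfl

lemma star_rightContract_star (hA : ∀ a : A, comul (R := R) (star a) = star (comul a))
    (hB : ∀ b : B, comul (R := R) (star b) = star (comul b)) {e e' : A →ₗ[R] B →ₗ[R] R}
    (he : ∀ a b, e' a b = star (e (star a) (star b))) (x : A ⊗[R] B) :
    star (rightContract e (star x)) = rightContract e' x := by
  rw [rightContract, comp_apply, map_star_of_map_star hA hB, star_contractOuter_star he]
  rfl

end Star

section Hopf

variable {X : Type*} [NormedRing X] [StarRing X] [CStarRing X] [NormedAlgebra ℂ X]
  [StarModule ℂ X] [FiniteDimensional ℂ X] (h : FiniteHopfCStar X)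

abbrev FiniteHopfCStar.toCoalgebra : Coalgebra ℂ X where
  comul := h.comul
  counit := h.counit
  coassoc := LinearMap.ext h.coassoc
  rTensor_counit_comp_comul := LinearMap.ext fun x => by
    simpa using congrArg (TensorProduct.lid ℂ X).symm (h.counit_comul x)
  lTensor_counit_comp_comul := LinearMap.ext fun x => by
    simpa using congrArg (TensorProduct.rid ℂ X).symm (h.comul_counit x)

lemma FiniteHopfCStar.antipode_star (x : X) : h.antipode (star x) = star (h.antipode x) := by
  simpa [h.antipode_antipode, eq_comm] using
    congrArg star (h.star_antipode_star_antipode (h.antipode x))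

lemma FiniteHopfCStar.mul_comm_rTensor_antipode_comul (x : X) :
    mul' ℂ X (TensorProduct.comm ℂ X X (rTensor X h.antipode (h.comul x))) = h.counit x • 1 := by
  have hS : rTensor X h.antipode (h.comul (star x)) = star (rTensor X h.antipode (h.comul x)) := by
    rw [h.comul_star]
    exact map_star_of_map_star h.antipode_star (fun _ => rfl) _
  have key := congrArg star (h.mul_antipode_rTensor_comul (star x))
  rw [hS, h.counit_star] at key
  have hmul := congr($(intrinsicStar_mul' (R' := ℂ) (E := X)) (rTensor X h.antipode (h.comul x)))
  simp only [intrinsicStar_apply, comp_apply, LinearEquiv.coe_coe] at hmul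
  rw [← hmul, key, star_smul, star_one, star_star]

end Hopf

section Pairing

variable {A B : Type*}
  [NormedRing A] [StarRing A] [CStarRing A] [NormedAlgebra ℂ A] [StarModule ℂ A]
  [FiniteDimensional ℂ A]
  [NormedRing B] [StarRing B] [CStarRing B] [NormedAlgebra ℂ B] [StarModule ℂ B]
  [FiniteDimensional ℂ B]
  {hA : FiniteHopfCStar A} {hB : FiniteHopfCStar B} {p : A →ₗ[ℂ] B →ₗ[ℂ] ℂ}

lemma IsHopfPairing.conj_apply_star (hp : IsHopfPairing hA hB p) (a : A) (b : B) :
    starRingEnd ℂ (p (star a) (star b)) = p a (hB.antipode b) := by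
  rw [hp.pair_star, hB.antipode_star, star_star, Complex.conj_conj]

lemma IsHopfPairing.pairT_comul (hp : IsHopfPairing hA hB p) (a : A) (z : B ⊗[ℂ] B) :
    pairT p (hA.comul a) z = p a (mul' ℂ B z) := by
  induction z using TensorProduct.induction_on with
  | zero => simp
  | tmul b₁ b₂ => rw [hp.pair_comul, mul'_apply]
  | add z w hz hw => rw [map_add, map_add, map_add, hz, hw]

lemma IsHopfPairing.convPair_antipode (hp : IsHopfPairing hA hB p) :
    letI := hA.toCoalgebra
    letI := hB.toCoalgebra
    convPair p (p.compl₂ hB.antipode) = (LinearMap.mul ℂ ℂ).compl₁₂ counit counit := by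
  let _ := hA.toCoalgebra
  let _ := hB.toCoalgebra
  have hcross : crossPair p (p.compl₂ hB.antipode) =
      (pairT p).compl₂ ((TensorProduct.comm ℂ B B).toLinearMap ∘ₗ rTensor B hB.antipode) := by
    ext; simp [pairT]
  ext a b
  rw [convPair, compl₁₂_apply, hcross]
  change pairT p (hA.comul a) (TensorProduct.comm ℂ B B (rTensor B hB.antipode (hB.comul b))) =
    hA.counit a * hB.counit b
  rw [hp.pairT_comul, hB.mul_comm_rTensor_antipode_comul, map_smul, hp.pair_one_right,
    smul_eq_mul, mul_comm]

lemma comul3_star (h : FiniteHopfCStar A) (a : A) : comul3 h (star a) = star (comul3 h a) := by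
  rw [comul3, comp_apply, h.comul_star]
  exact map_star_of_map_star (fun _ => rfl) h.comul_star _

lemma starD_eq_leftContract_rightContract (x : A ⊗[ℂ] B) :
    letI := hA.toCoalgebra
    letI := hB.toCoalgebra
    starD hA hB p x = leftContract p (rightContract (p.compl₂ hB.antipode) (star x)) := by
  let _ := hA.toCoalgebra
  let _ := hB.toCoalgebra
  set M := map (comul3 hA) (lTensor B (lTensor B hB.antipode) ∘ₗ comul3 hB)
  have hM_star : M (star x) = star (M x) := by
    refine map_star_of_map_star (comul3_star hA) (fun b => ?_) x
    rw [comp_apply, comul3_star]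
    exact map_star_of_map_star (fun _ => rfl)
      (map_star_of_map_star (fun _ => rfl) hB.antipode_star) _
  have hregroup : starContract p ∘ₗ map LinearMap.id (lTensor B (lTensor B hB.antipode)) =
      (contractInner p ∘ₗ contractOuter (p.compl₂ hB.antipode)) ∘ₗ
        map LinearMap.id (TensorProduct.assoc ℂ B B B).symm.toLinearMap := by
    ext; simp [starContract, collapse, rot31, rot13, smul_smul, mul_comm]
  have hM : starContract p ∘ₗ M = leftContract p ∘ₗ rightContract (p.compl₂ hB.antipode) := by
    calc starContract p ∘ₗ M
        = (starContract p ∘ₗ map LinearMap.id (lTensor B (lTensor B hB.antipode))) ∘ₗ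
            map (comul3 hA) (comul3 hB) := by
          rw [comp_assoc, ← map_comp, id_comp]
      _ = (contractInner p ∘ₗ contractOuter (p.compl₂ hB.antipode)) ∘ₗ
            map (comul3 hA) ((TensorProduct.assoc ℂ B B B).symm.toLinearMap ∘ₗ comul3 hB) := by
          rw [hregroup, comp_assoc, ← map_comp, id_comp]
      _ = leftContract p ∘ₗ rightContract (p.compl₂ hB.antipode) := by
          rw [leftContract_comp_rightContract_eq, ← coassoc_symm]
          rfl
  rw [starD, ← hM_star, ← comp_apply (starContract p), hM, comp_apply]

lemma IsHopfPairing.star_leftContract_rightContract_star (hp : IsHopfPairing hA hB p)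
    (x : A ⊗[ℂ] B) :
    letI := hA.toCoalgebra
    letI := hB.toCoalgebra
    star (leftContract p (rightContract (p.compl₂ hB.antipode) (star x))) =
      leftContract (p.compl₂ hB.antipode) (rightContract p x) := by
  let _ := hA.toCoalgebra
  let _ := hB.toCoalgebra
  have hL : ∀ a b, p.compl₂ hB.antipode a b = star (p (star a) (star b)) := fun a b =>
    (hp.conj_apply_star a b).symm
  have hR : ∀ a b, p a b = star (p.compl₂ hB.antipode (star a) (star b)) := fun a b => by
    rw [compl₂_apply, hB.antipode_star, ← starRingEnd_apply, hp.conj_apply_star,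
      hB.antipode_antipode]
  rw [← star_star (rightContract _ (star x)), star_leftContract_star hA.comul_star hB.comul_star hL,
    star_rightContract_star hA.comul_star hB.comul_star hR]

end Pairing

variable {A B : Type*}
  [NormedRing A] [StarRing A] [CStarRing A] [NormedAlgebra ℂ A] [StarModule ℂ A]
  [FiniteDimensional ℂ A]
  [NormedRing B] [StarRing B] [CStarRing B] [NormedAlgebra ℂ B] [StarModule ℂ B]
  [FiniteDimensional ℂ B]

theorem stmt_11_general (hA : FiniteHopfCStar A) (hB : FiniteHopfCStar B)
    (p : A →ₗ[ℂ] B →ₗ[ℂ] ℂ) (hp : IsHopfPairing hA hB p) :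
    ∀ (a : A) (b : B), starD hA hB p (starD hA hB p (a ⊗ₜ[ℂ] b)) = a ⊗ₜ[ℂ] b := by
  intro a b
  let _ := hA.toCoalgebra
  let _ := hB.toCoalgebra
  set pS := p.compl₂ hB.antipode
  have hid : leftContract p ∘ₗ rightContract pS ∘ₗ leftContract pS ∘ₗ rightContract p =
      LinearMap.id := by
    rw [← comp_assoc (rightContract p) (leftContract pS), ← leftContract_comp_rightContract_comm,
      comp_assoc, ← comp_assoc _ (leftContract pS), leftContract_comp_leftContract,
      rightContract_comp_rightContract, hp.convPair_antipode, leftContract_counit,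
      rightContract_counit, id_comp]
  rw [starD_eq_leftContract_rightContract, starD_eq_leftContract_rightContract,
    hp.star_leftContract_rightContract_star]
  exact congr($hid (a ⊗ₜ b))

/-- Lemma 3.3: the involution of `D(A,B)` is involutive: `((a,b)*)* = (a,b)`. -/
theorem stmt_11 (hA : FiniteHopfCStar A) (hB : FiniteHopfCStar B)
    (p : A →ₗ[ℂ] B →ₗ[ℂ] ℂ) (hp : IsHopfPairing hA hB p) (hnd : Nondegenerate p) :
    ∀ (a : A) (b : B), starD hA hB p (starD hA hB p (a ⊗ₜ[ℂ] b)) = a ⊗ₜ[ℂ] b :=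
  stmt_11_general hA hB p hp

end QD
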